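/- For relatively prime positive integers p and q with q/p ≤ 1, the word u_{q/p} in the free group F(a,b), defined by u_{q/p} = a·û·b^{(-1)^q}·û^{-1} with û = b^{ε₁}a^{ε₂}⋯b^{ε_{p-2}}a^{ε_{p-1}} when p is odd, and u_{q/p} = a·û·a^{-1}·û^{-1} with û = b^{ε₁}a^{ε₂}⋯a^{ε_{p-2}}b^{ε_{p-1}} when p is even, where ε_i = (-1)^{⌊iq/p⌋}, has word length exactly 2p. -/

import Mathlib

/-- A letter in the free group on two generators `a = 0`, `b = 1`:
the generator together with the exponent sign (`true` = exponent `+1`). -/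
abbrev Letter := Fin 2 × Bool

/-- A word in the generators `a±1, b±1`. -/
abbrev Word := List Letter

/-- Continued fraction `[m₁,…,m_k] = 1/(m₁ + 1/(m₂ + ⋯ + 1/m_k))`. -/
def cf : List ℕ → ℚ
  | [] => 0
  | m :: rest => 1 / (m + cf rest)

/-- `ε_i = (-1)^⌊iq/p⌋`. -/
def eps (p q i : ℕ) : ℤ := (-1) ^ (i * q / p)

/-- The word `û_{q/p} = b^{ε₁} a^{ε₂} b^{ε₃} ⋯` (of length `p-1`) as a list of letters. -/
def hatList (p q : ℕ) : Word :=
  (List.range (p - 1)).map (fun j =>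
    ((if (j + 1) % 2 = 1 then (1 : Fin 2) else 0), decide ((((j + 1) * q) / p) % 2 = 0)))

/-- The formal inverse of a word. -/
def invWord (w : Word) : Word := (w.map (fun x => (x.1, !x.2))).reverse

/-- The 2-bridge relator word `u_{q/p}`: `a·û·b^{(-1)^q}·û⁻¹` for `p` odd, and
`a·û·a⁻¹·û⁻¹` for `p` even. -/
def uList (p q : ℕ) : Word :=
  ((0 : Fin 2), true) :: (hatList p q ++
    (if p % 2 = 1 then [((1 : Fin 2), decide (q % 2 = 0))] else [((0 : Fin 2), false)]) ++
    invWord (hatList p q))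

/-- The relator word `u_r` of slope `r = q/p` (in lowest terms). -/
def slopeWord (r : ℚ) : Word := uList r.den r.num.toNat

/-- The slopes `r_0 = [4,3,3]`, `r_i = [4,2,(i-1)⟨3⟩,4,3]` for `i ≥ 1`. -/
def rSlope : ℕ → ℚ
  | 0 => cf [4, 3, 3]
  | i + 1 => cf ([4, 2] ++ List.replicate i 3 ++ [4, 3])

/-- Run-lengths of a list of signs (auxiliary). -/
def runsAux : Bool → ℕ → List Bool → List ℕ
  | _, n, [] => [n]
  | s, n, x :: xs => if x = s then runsAux s (n + 1) xs else n :: runsAux x 1 xs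

/-- The S-sequence of a word: the lengths of its maximal positive/negative blocks. -/
def Sseq (w : Word) : List ℕ :=
  match w.map Prod.snd with
  | [] => []
  | s :: xs => runsAux s 1 xs

/-- A word is reduced: no adjacent mutually inverse letters. -/
def Reduced (w : Word) : Prop :=
  List.Chain' (fun u v => ¬(u.1 = v.1 ∧ u.2 ≠ v.2)) w

/-- A word is alternating: adjacent letters use different generators. -/
def Alternating (w : Word) : Prop := List.Chain' (fun u v => u.1 ≠ v.1) w

/-- Cyclically reduced: reduced including the wrap-around pair. -/
def CyclicallyReduced (w : Word) : Prop :=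
  List.Chain' (fun u v => ¬(u.1 = v.1 ∧ u.2 ≠ v.2)) (w ++ w)

/-- Cyclically alternating: alternating including the wrap-around pair. -/
def CyclicallyAlternating (w : Word) : Prop :=
  List.Chain' (fun u v => u.1 ≠ v.1) (w ++ w)

/-- The word starts at a block boundary of the cyclic word: either all signs agree,
or the first and last signs differ. -/
def StartsAtBoundary (w : Word) : Prop :=
  (∀ x ∈ w, ∀ y ∈ w, x.2 = y.2) ∨ (∀ x ∈ w.head?, ∀ y ∈ w.getLast?, x.2 ≠ y.2)

/-- `L` is a linear representative of the cyclic S-sequence `CS(w)`: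
the S-sequence of some rotation of `w` starting at a block boundary. -/
def IsCSRep (w : Word) (L : List ℕ) : Prop :=
  ∃ n, StartsAtBoundary (w.rotate n) ∧ Sseq (w.rotate n) = L

/-- From a linear representative `L = (m+1, t₁⟨m⟩, m+1, t₂⟨m⟩, …)` of a CS-sequence,
extract the CT-sequence `(t₁, t₂, …)` of run-lengths of `m`'s. -/
def ctOf (m : ℕ) (L : List ℕ) : List ℕ := ((L.splitOn (m + 1)).drop 1).map List.length

/-- The cyclic sequence represented by `L` contains `pat` as a contiguous subsequence. -/
def CyclicContains (L pat : List ℕ) : Prop := ∃ k, pat.isPrefixOf (L.rotate k)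

/-- The number of (cyclic) occurrences of `pat` as a contiguous subsequence of
the cyclic sequence represented by `L`. -/
def cyclicCount (pat L : List ℕ) : ℕ :=
  ((List.range L.length).filter (fun k => pat.isPrefixOf (L.rotate k))).length

/-- `⟨⟨S₁, S₂, S₁, S₂⟩⟩` is the symmetric decomposition of the cyclic S-sequence of `w`
(for a slope whose continued fraction starts with `m`): each `Sᵢ` is a palindrome,
`S₁` begins and ends with `m+1`, and `S₂` begins and ends with `m`. -/
def IsSymmDecomp (w : Word) (m : ℕ) (S1 S2 : List ℕ) : Prop :=
  IsCSRep w (S1 ++ S2 ++ S1 ++ S2) ∧ S1.reverse = S1 ∧ S2.reverse = S2 ∧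
  (∀ x ∈ S1.head?, x = m + 1) ∧ (∀ x ∈ S1.getLast?, x = m + 1) ∧
  S2.head? = some m ∧ S2.getLast? = some m

/-- Expand a sequence of block lengths into the corresponding list of signs,
blocks alternating in sign starting with `s`. -/
def signList : Bool → List ℕ → List Bool
  | _, [] => []
  | s, n :: rest => List.replicate n s ++ signList (!s) rest

/-- The alternating word with initial generator `g0`, initial sign `s0`,
and S-sequence `S`. -/
def altWord (g0 : Fin 2) (s0 : Bool) (S : List ℕ) : Word :=
  (List.range (signList s0 S).length).zipWith (fun (k : ℕ) s => ((g0 + (Fin.ofNat 2 k : Fin 2)), s))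
    (signList s0 S)

/-- The product `w * w'` is freely reduced without cancellation at the junction. -/
def NoCancel (w w' : Word) : Prop :=
  ∀ x ∈ w.getLast?, ∀ y ∈ w'.head?, ¬(x.1 = y.1 ∧ x.2 ≠ y.2)

/-- The word `X`: alternating, starting with `a`, with S-sequence `(4,4,4,5,4,4)`
(it ends with `a⁻¹`). -/
def Xword : Word := altWord 0 true [4, 4, 4, 5, 4, 4]

/-- The endomorphism of `F(a,b)` with `a ↦ X⁻¹`, `b ↦ b⁻¹`. -/
def fmap : FreeGroup (Fin 2) →* FreeGroup (Fin 2) :=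
  FreeGroup.lift (fun i => if i = 0 then (FreeGroup.mk Xword)⁻¹ else (FreeGroup.of 1)⁻¹)

/-- The set of relators `{u_{r_i} : i ≥ 0}`. -/
def relsG : Set (FreeGroup (Fin 2)) := {x | ∃ i, x = FreeGroup.mk (slopeWord (rSlope i))}

/-- The symmetrized set generated by the relators `u_{r_i}`: all cyclic permutations
of the `u_{r_i}` and of their inverses. -/
def Rset : Set Word :=
  {w | ∃ i n, w = (slopeWord (rSlope i)).rotate n ∨
      w = (invWord (slopeWord (rSlope i))).rotate n}

/-!
Consecutive letters of `u_{q/p}` always involve different generators: `û` reads `b, a, b, …`,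
the middle letter continues this alternation, and `û⁻¹` retraces it backwards. So the generator
of the `i`-th letter is `i mod 2` throughout, and an alternating word is freely reduced.
-/

theorem FreeGroup.isReduced_of_isChain_fst_ne {α : Type*} {w : List (α × Bool)}
    (h : (w.map Prod.fst).IsChain (· ≠ ·)) : FreeGroup.IsReduced w :=
  ((List.isChain_map Prod.fst).mp h).imp fun {_ _} hne heq => absurd heq hne

theorem Fin.ite_mod_two_eq_ofNat (i : ℕ) :
    (if i % 2 = 1 then (1 : Fin 2) else 0) = Fin.ofNat 2 i := by
  ext
  split_ifs <;> simp <;> omega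

theorem isChain_ne_map_ofNat_range (n : ℕ) :
    ((List.range n).map (Fin.ofNat 2)).IsChain (· ≠ ·) := by
  refine (List.isChain_map _).mpr ((List.isChain_range _ n).mpr fun m _ h => ?_)
  have := congrArg Fin.val h
  simp only [Fin.val_ofNat] at this
  omega

theorem uList_map_fst (p q : ℕ) (hp : 0 < p) :
    (uList p q).map Prod.fst = (List.range (2 * p)).map (Fin.ofNat 2) := by
  obtain ⟨n, rfl⟩ : ∃ n, p = n + 1 := ⟨p - 1, by omega⟩
  have hrange : List.range (2 * (n + 1)) =
      0 :: (List.range n).map (· + 1) ++ [n + 1] ++ (List.range n).map (n + 2 + ·) := by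
    rw [show 2 * (n + 1) = (n + 1 + 1) + n by omega, List.range_add, List.range_succ,
      List.range_succ_eq_map]
  have hrev : (List.range n).reverse.map (fun j => Fin.ofNat 2 (j + 1)) =
      (List.range n).map (fun k => Fin.ofNat 2 (n + 2 + k)) := by
    rw [List.range_eq_range', List.reverse_range', List.map_map, ← List.range_eq_range']
    refine List.map_congr_left fun k hk => ?_
    have := List.mem_range.mp hk
    ext
    simp only [Function.comp_apply, Fin.val_ofNat, zero_add]
    omega
  have hmid : (if (n + 1) % 2 = 1 then [((1 : Fin 2), decide (q % 2 = 0))]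
      else [((0 : Fin 2), false)]).map Prod.fst = [Fin.ofNat 2 (n + 1)] := by
    rw [← Fin.ite_mod_two_eq_ofNat]
    split_ifs <;> rfl
  simp only [uList, hatList, invWord, List.map_cons, List.map_append, List.map_map,
    List.map_reverse, Function.comp_def, Fin.ite_mod_two_eq_ofNat, hmid, Nat.add_sub_cancel]
  rw [← List.map_reverse, hrev, hrange]
  simp only [List.map_cons, List.map_append, List.map_map, Function.comp_def, List.cons_append,
    List.append_assoc]
  rfl

theorem uword_length_general (p q : ℕ) (hq : 0 < q) (hqp : q ≤ p) :
    (FreeGroup.mk (uList p q)).toWord.length = 2 * p := by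
  have hfst := uList_map_fst p q (hq.trans_le hqp)
  have hred : FreeGroup.IsReduced (uList p q) :=
    FreeGroup.isReduced_of_isChain_fst_ne (hfst ▸ isChain_ne_map_ofNat_range _)
  rw [FreeGroup.toWord_mk, hred.reduce_eq, ← List.length_map Prod.fst, hfst, List.length_map,
    List.length_range]

/-- The relator word `u_{q/p}` is reduced of word length exactly `2p`. -/
theorem uword_length (p q : ℕ) (hq : 0 < q) (hqp : q ≤ p) (hcop : Nat.Coprime p q) :
    (FreeGroup.mk (uList p q)).toWord.length = 2 * p :=
  uword_length_general p q hq hqp
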